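/- arXiv:1511.09041 — 2 statements merged into one kernel-verified Lean document; each statement's English description precedes it below -/
import Mathlib

section
/- Let b1, b2 : [0,T] × ℝ → ℝ be Borel measurable, uniformly Lipschitz in the second variable, with b_i(·,0) square integrable. Let f1, f2 be right-continuous square-integrable functions on [0,T] with f1 = f2 + A where A is a nondecreasing right-continuous function with A(0) = 0. Let x1 ≥ x2 be reals, and for i = 1,2 let y^i be the unique right-continuous square-integrable solution of y^i(t) = x_i + ∫_0^t b_i(s, y^i(s)) ds + f_i(t). If b1(t, y²(t)) ≥ b2(t, y²(t)) for a.e. t, then y¹(t) ≥ y²(t) for all t ∈ [0,T]. -/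
/-!
Put `w = y₁ - y₂`. Subtracting the two equations, the monotone term `A` only helps, and the
Lipschitz bound together with `b₂(·, y₂) ≤ b₁(·, y₂)` gives `w σ - C ∫_σ^t |w| ≤ w t` for
`σ ≤ t`, with `w 0 = x₁ - x₂ ≥ 0`. Starting from the last time `τ ≤ t` at which `w ≥ 0`
(where `w τ ≥ 0` by letting `σ ↑ τ` in the same inequality), this yields `w⁻ t ≤ C ∫_0^t w⁻`,
and the integral form of Grönwall's inequality forces `w⁻ = 0`.
-/

open MeasureTheory Set intervalIntegral

theorem memLp_apply_of_lipschitzWith {α : Type*} [MeasurableSpace α] {μ : Measure α}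
    {p : ENNReal} {b : α → ℝ → ℝ} {C : NNReal} {y : α → ℝ}
    (hbm : Measurable (Function.uncurry b)) (hb : ∀ t, LipschitzWith C (b t))
    (hb₀ : MemLp (fun t => b t 0) p μ) (hy : MemLp y p μ) :
    MemLp (fun t => b t (y t)) p μ := by
  refine (hb₀.norm.add (hy.norm.const_mul (C : ℝ))).mono' ?_ (ae_of_all _ fun t => ?_)
  · exact (hbm.comp_aemeasurable
      (aemeasurable_id.prodMk hy.aestronglyMeasurable.aemeasurable)).aestronglyMeasurable
  · calc ‖b t (y t)‖ ≤ ‖b t 0‖ + ‖b t (y t) - b t 0‖ := norm_le_insert' _ _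
      _ ≤ ‖b t 0‖ + C * ‖y t‖ := by
        gcongr
        simpa using (hb t).norm_sub_le (y t) 0

theorem eqOn_zero_of_le_mul_integral {g : ℝ → ℝ} {a b C : ℝ}
    (hg₀ : ∀ t ∈ Icc a b, 0 ≤ g t) (hg : IntegrableOn g (Icc a b))
    (hle : ∀ t ∈ Icc a b, g t ≤ C * ∫ s in a..t, g s) :
    ∀ t ∈ Icc a b, g t = 0 := by
  intro t ht
  have hab : a ≤ b := ht.1.trans ht.2
  have ha : a ∈ Icc a b := left_mem_Icc.2 hab
  -- `G = ∫ g` need not be differentiable, but `H = ∫ G` is, with `H' = G ≤ C H`.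
  set G : ℝ → ℝ := fun u => ∫ s in a..u, g s
  set H : ℝ → ℝ := fun u => ∫ s in a..u, G s
  have hG_cont : ContinuousOn G (Icc a b) := by
    rw [← uIcc_of_le hab] at hg ⊢
    exact continuousOn_primitive_interval hg
  have hG_int : IntegrableOn G (Icc a b) := hG_cont.integrableOn_Icc
  have hH_cont : ContinuousOn H (Icc a b) := by
    rw [← uIcc_of_le hab] at hG_int ⊢
    exact continuousOn_primitive_interval hG_int
  have hG₀ : ∀ u ∈ Icc a b, 0 ≤ G u := fun u hu =>
    integral_nonneg hu.1 fun s hs => hg₀ s ⟨hs.1, hs.2.trans hu.2⟩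
  have hH₀ : ∀ u ∈ Icc a b, 0 ≤ H u := fun u hu =>
    integral_nonneg hu.1 fun s hs => hG₀ s ⟨hs.1, hs.2.trans hu.2⟩
  have hG_le : ∀ u ∈ Icc a b, G u ≤ C * H u := fun u hu =>
    calc G u ≤ ∫ s in a..u, C * G s :=
          integral_mono_on hu.1 (hg.mono_set (uIcc_subset_Icc ha hu)).intervalIntegrable
            ((hG_int.mono_set (uIcc_subset_Icc ha hu)).intervalIntegrable.const_mul C)
            fun s hs => hle s ⟨hs.1, hs.2.trans hu.2⟩
      _ = C * H u := integral_const_mul C _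
  have hH_deriv : ∀ u ∈ Ico a b, HasDerivWithinAt H (G u) (Ici u) u := by
    intro u hu
    have : Fact (u ∈ Icc a b) := ⟨Ico_subset_Icc_self hu⟩
    exact (integral_hasDerivWithinAt_right
      (hG_int.mono_set (uIcc_subset_Icc ha this.out)).intervalIntegrable
      (hG_cont.stronglyMeasurableAtFilter_nhdsWithin measurableSet_Icc u)
      (hG_cont u this.out)).mono_of_mem_nhdsWithin (Icc_mem_nhdsGE_of_mem hu)
  have hH_zero : H t = 0 := by
    refine eq_zero_of_abs_deriv_le_mul_abs_self_of_eq_zero_right (K := C) hH_cont hH_deriv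
      integral_same (fun u hu => ?_) t ht
    have hu' := Ico_subset_Icc_self hu
    rw [Real.norm_eq_abs, Real.norm_eq_abs, abs_of_nonneg (hG₀ u hu'),
      abs_of_nonneg (hH₀ u hu')]
    exact hG_le u hu'
  have hG_zero : G t = 0 := le_antisymm (by simpa [hH_zero] using hG_le t ht) (hG₀ t ht)
  have hgt : g t ≤ C * G t := hle t ht
  exact le_antisymm (by simpa [hG_zero] using hgt) (hg₀ t ht)

theorem negPart_le_mul_integral_negPart {w : ℝ → ℝ} {a b C : ℝ} (hC : 0 ≤ C)
    (hw : IntegrableOn w (Icc a b)) (ha : 0 ≤ w a)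
    (hinc : ∀ σ t, a ≤ σ → σ ≤ t → t ≤ b →
      w σ - C * ∫ s in σ..t, |w s| ≤ w t) :
    ∀ t ∈ Icc a b, (w t)⁻ ≤ C * ∫ s in a..t, (w s)⁻ := by
  intro t ht
  have hat : a ∈ Icc a t := left_mem_Icc.2 ht.1
  have hw_neg : IntegrableOn (fun s => (w s)⁻) (Icc a t) :=
    IntegrableOn.mono_set hw.neg_part (Icc_subset_Icc_right ht.2)
  rcases le_or_gt 0 (w t) with hwt | hwt
  · rw [negPart_eq_zero.2 hwt]
    exact mul_nonneg hC (integral_nonneg ht.1 fun s _ => negPart_nonneg _)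
  set S := {s ∈ Icc a t | 0 ≤ w s}
  have hS : S.Nonempty := ⟨a, hat, ha⟩
  have hS_bdd : BddAbove S := ⟨t, fun s hs => hs.1.2⟩
  set τ := sSup S
  have hτ : τ ∈ Icc a t := ⟨le_csSup hS_bdd ⟨hat, ha⟩, csSup_le hS fun s hs => hs.1.2⟩
  -- Let `σ ∈ S` tend to `τ` in `hinc σ τ`.
  have hwτ : 0 ≤ w τ := by
    have hcont : ContinuousOn (fun σ => -(C * ∫ s in σ..τ, |w s|)) (Icc a τ) := by
      have := continuousOn_primitive_interval_left (μ := volume)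
        (IntegrableOn.mono_set hw.abs (uIcc_subset_Icc (left_mem_Icc.2 (ht.1.trans ht.2))
          ⟨hτ.1, hτ.2.trans ht.2⟩))
      rw [uIcc_of_le hτ.1] at this
      exact (this.const_smul C).neg
    have hSτ : S ⊆ Icc a τ := fun s hs => ⟨hs.1.1, le_csSup hS_bdd hs⟩
    have := ContinuousWithinAt.closure_le (csSup_mem_closure hS hS_bdd)
      ((hcont τ (right_mem_Icc.2 hτ.1)).mono hSτ) (continuousWithinAt_const (b := w τ))
      fun σ hσ => by linarith [hσ.2, hinc σ τ hσ.1.1 (hSτ hσ).2 (hτ.2.trans ht.2)]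
    change -(C * ∫ s in τ..τ, |w s|) ≤ w τ at this
    simpa using this
  have hτt : τ < t := lt_of_le_of_ne hτ.2 fun h => by linarith [h ▸ hwτ]
  have hw_neg_after : ∀ s ∈ Ioc τ t, w s < 0 := fun s hs => by
    by_contra! hws
    exact hs.1.not_ge (le_csSup hS_bdd ⟨⟨hτ.1.trans hs.1.le, hs.2⟩, hws⟩)
  have habs : ∫ s in τ..t, |w s| = ∫ s in τ..t, (w s)⁻ := by
    rw [integral_of_le hτt.le, integral_of_le hτt.le]
    refine setIntegral_congr_fun measurableSet_Ioc fun s hs => ?_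
    rw [abs_of_neg (hw_neg_after s hs), negPart_eq_neg.2 (hw_neg_after s hs).le]
  have hmono : ∫ s in τ..t, (w s)⁻ ≤ ∫ s in a..t, (w s)⁻ :=
    integral_mono_interval hτ.1 hτt.le le_rfl (ae_of_all _ fun s => negPart_nonneg _)
      ((intervalIntegrable_iff_integrableOn_Icc_of_le ht.1).2 hw_neg)
  calc (w t)⁻ = -w t := negPart_eq_neg.2 hwt.le
    _ ≤ C * ∫ s in τ..t, |w s| := by linarith [hinc τ t hτ.1 hτ.2 ht.2]
    _ ≤ C * ∫ s in a..t, (w s)⁻ := by rw [habs]; gcongr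

theorem nonneg_of_sub_mul_integral_abs_le {w : ℝ → ℝ} {a b C : ℝ} (hC : 0 ≤ C)
    (hw : IntegrableOn w (Icc a b)) (ha : 0 ≤ w a)
    (hinc : ∀ σ t, a ≤ σ → σ ≤ t → t ≤ b →
      w σ - C * ∫ s in σ..t, |w s| ≤ w t) :
    ∀ t ∈ Icc a b, 0 ≤ w t := fun t ht =>
  negPart_eq_zero.1 <| eqOn_zero_of_le_mul_integral (fun s _ => negPart_nonneg (w s))
    hw.neg_part (negPart_le_mul_integral_negPart hC hw ha hinc) t ht

theorem sub_mul_integral_abs_le_of_eq_integral_add {w p A : ℝ → ℝ} {a b c C : ℝ}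
    (hp : IntegrableOn p (Icc a b)) (hw : IntegrableOn w (Icc a b))
    (hA : MonotoneOn A (Icc a b)) (hwp : ∀ t ∈ Icc a b, w t = c + (∫ s in a..t, p s) + A t)
    (hpw : ∀ᵐ s ∂volume.restrict (Icc a b), -(C * |w s|) ≤ p s) :
    ∀ σ t, a ≤ σ → σ ≤ t → t ≤ b → w σ - C * ∫ s in σ..t, |w s| ≤ w t := by
  intro σ t hσ hσt ht
  have ha : a ∈ Icc a b := ⟨le_rfl, hσ.trans (hσt.trans ht)⟩
  have hσ' : σ ∈ Icc a b := ⟨hσ, hσt.trans ht⟩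
  have ht' : t ∈ Icc a b := ⟨hσ.trans hσt, ht⟩
  have hincr : w t - w σ = (∫ s in σ..t, p s) + (A t - A σ) := by
    rw [hwp t ht', hwp σ hσ', ← integral_interval_sub_left
      (hp.mono_set (uIcc_subset_Icc ha ht')).intervalIntegrable
      (hp.mono_set (uIcc_subset_Icc ha hσ')).intervalIntegrable]
    ring
  have hlower : -(C * ∫ s in σ..t, |w s|) ≤ ∫ s in σ..t, p s := by
    rw [← intervalIntegral.integral_const_mul, ← intervalIntegral.integral_neg]
    exact integral_mono_ae_restrict hσt
      ((IntegrableOn.mono_set hw.abs (uIcc_subset_Icc hσ' ht')).intervalIntegrable.const_mul C).neg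
      (hp.mono_set (uIcc_subset_Icc hσ' ht')).intervalIntegrable
      (ae_restrict_of_ae_restrict_of_subset (Icc_subset_Icc hσ ht) hpw)
  linarith [hA hσ' ht' hσt]

theorem stmt_0_general (T : ℝ) (hT : 0 < T)
    (b₁ b₂ : ℝ → ℝ → ℝ) (C : NNReal)
    (hb₁m : Measurable (Function.uncurry b₁)) (hb₂m : Measurable (Function.uncurry b₂))
    (hb₁lip : ∀ t, LipschitzWith C (b₁ t)) (hb₂lip : ∀ t, LipschitzWith C (b₂ t))
    (hb₁0 : MemLp (fun t => b₁ t 0) 2 (volume.restrict (Icc 0 T)))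
    (hb₂0 : MemLp (fun t => b₂ t 0) 2 (volume.restrict (Icc 0 T)))
    (f₁ f₂ A : ℝ → ℝ)
    (hAmono : MonotoneOn A (Icc 0 T))
    (hA0 : A 0 = 0)
    (hf : ∀ t ∈ Icc (0:ℝ) T, f₁ t = f₂ t + A t)
    (x₁ x₂ : ℝ) (hx : x₂ ≤ x₁)
    (y₁ y₂ : ℝ → ℝ)
    (hy₁L2 : MemLp y₁ 2 (volume.restrict (Icc 0 T)))
    (hy₂L2 : MemLp y₂ 2 (volume.restrict (Icc 0 T)))
    (heq₁ : ∀ t ∈ Icc (0:ℝ) T, y₁ t = x₁ + (∫ s in (0:ℝ)..t, b₁ s (y₁ s)) + f₁ t)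
    (heq₂ : ∀ t ∈ Icc (0:ℝ) T, y₂ t = x₂ + (∫ s in (0:ℝ)..t, b₂ s (y₂ s)) + f₂ t)
    (hcomp : ∀ᵐ t ∂(volume.restrict (Icc (0:ℝ) T)), b₂ t (y₂ t) ≤ b₁ t (y₂ t)) :
    ∀ t ∈ Icc (0:ℝ) T, y₂ t ≤ y₁ t := by
  have h0 : (0 : ℝ) ∈ Icc 0 T := left_mem_Icc.2 hT.le
  have hp₁ : IntegrableOn (fun s => b₁ s (y₁ s)) (Icc 0 T) :=
    (memLp_apply_of_lipschitzWith hb₁m hb₁lip hb₁0 hy₁L2).integrable one_le_two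
  have hp₂ : IntegrableOn (fun s => b₂ s (y₂ s)) (Icc 0 T) :=
    (memLp_apply_of_lipschitzWith hb₂m hb₂lip hb₂0 hy₂L2).integrable one_le_two
  have hw : IntegrableOn (fun t => y₁ t - y₂ t) (Icc 0 T) :=
    (hy₁L2.integrable one_le_two).sub (hy₂L2.integrable one_le_two)
  have hwp : ∀ t ∈ Icc 0 T, y₁ t - y₂ t =
      (x₁ - x₂) + (∫ s in (0:ℝ)..t, b₁ s (y₁ s) - b₂ s (y₂ s)) + A t := by
    intro t ht
    rw [integral_sub (hp₁.mono_set (uIcc_subset_Icc h0 ht)).intervalIntegrable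
      (hp₂.mono_set (uIcc_subset_Icc h0 ht)).intervalIntegrable,
      heq₁ t ht, heq₂ t ht, hf t ht]
    ring
  have hpw : ∀ᵐ s ∂volume.restrict (Icc 0 T),
      -(C * |y₁ s - y₂ s|) ≤ b₁ s (y₁ s) - b₂ s (y₂ s) := by
    filter_upwards [hcomp] with s hs
    have hlip : |b₁ s (y₁ s) - b₁ s (y₂ s)| ≤ C * |y₁ s - y₂ s| := by
      simpa [Real.dist_eq] using (hb₁lip s).dist_le_mul (y₁ s) (y₂ s)
    linarith [neg_abs_le (b₁ s (y₁ s) - b₁ s (y₂ s))]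
  have hw0 : 0 ≤ y₁ 0 - y₂ 0 := by simpa [hwp 0 h0, hA0] using hx
  intro t ht
  linarith [nonneg_of_sub_mul_integral_abs_le C.coe_nonneg hw hw0
    (sub_mul_integral_abs_le_of_eq_integral_add (hp₁.sub hp₂) hw hAmono hwp hpw) t ht]

/-- Comparison lemma for deterministic integral equations (Lemma 6.2, weak inequality). -/
theorem stmt_0 (T : ℝ) (hT : 0 < T)
    (b₁ b₂ : ℝ → ℝ → ℝ) (C : NNReal)
    (hb₁m : Measurable (Function.uncurry b₁)) (hb₂m : Measurable (Function.uncurry b₂))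
    (hb₁lip : ∀ t, LipschitzWith C (b₁ t)) (hb₂lip : ∀ t, LipschitzWith C (b₂ t))
    (hb₁0 : MemLp (fun t => b₁ t 0) 2 (volume.restrict (Icc 0 T)))
    (hb₂0 : MemLp (fun t => b₂ t 0) 2 (volume.restrict (Icc 0 T)))
    (f₁ f₂ A : ℝ → ℝ)
    (hf₂rc : ∀ t ∈ Icc (0:ℝ) T, ContinuousWithinAt f₂ (Ici t) t)
    (hf₂L2 : MemLp f₂ 2 (volume.restrict (Icc 0 T)))
    (hf₁rc : ∀ t ∈ Icc (0:ℝ) T, ContinuousWithinAt f₁ (Ici t) t)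
    (hf₁L2 : MemLp f₁ 2 (volume.restrict (Icc 0 T)))
    (hAmono : MonotoneOn A (Icc 0 T))
    (hArc : ∀ t ∈ Icc (0:ℝ) T, ContinuousWithinAt A (Ici t) t)
    (hA0 : A 0 = 0)
    (hf : ∀ t ∈ Icc (0:ℝ) T, f₁ t = f₂ t + A t)
    (x₁ x₂ : ℝ) (hx : x₂ ≤ x₁)
    (y₁ y₂ : ℝ → ℝ)
    (hy₁rc : ∀ t ∈ Icc (0:ℝ) T, ContinuousWithinAt y₁ (Ici t) t)
    (hy₂rc : ∀ t ∈ Icc (0:ℝ) T, ContinuousWithinAt y₂ (Ici t) t)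
    (hy₁L2 : MemLp y₁ 2 (volume.restrict (Icc 0 T)))
    (hy₂L2 : MemLp y₂ 2 (volume.restrict (Icc 0 T)))
    (heq₁ : ∀ t ∈ Icc (0:ℝ) T, y₁ t = x₁ + (∫ s in (0:ℝ)..t, b₁ s (y₁ s)) + f₁ t)
    (heq₂ : ∀ t ∈ Icc (0:ℝ) T, y₂ t = x₂ + (∫ s in (0:ℝ)..t, b₂ s (y₂ s)) + f₂ t)
    (hcomp : ∀ᵐ t ∂(volume.restrict (Icc (0:ℝ) T)), b₂ t (y₂ t) ≤ b₁ t (y₂ t)) :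
    ∀ t ∈ Icc (0:ℝ) T, y₂ t ≤ y₁ t :=
  stmt_0_general T hT b₁ b₂ C hb₁m hb₂m hb₁lip hb₂lip hb₁0 hb₂0 f₁ f₂ A hAmono hA0 hf x₁ x₂ hx y₁ y₂
    hy₁L2 hy₂L2 heq₁ heq₂ hcomp
end

section
/- Under the hypotheses of the comparison lemma for the deterministic integral equations y^i(t) = x_i + ∫_0^t b_i(s, y^i(s)) ds + f_i(t) (with f1 = f2 + A, A nondecreasing right-continuous with A(0)=0, and b1(t, y²(t)) ≥ b2(t, y²(t)) a.e.), if moreover x1 > x2 strictly, then y¹(t) > y²(t) for all t ∈ [0,T]. -/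
/-!
The difference `z = y₁ - y₂` satisfies `z t = (x₁ - x₂) + ∫₀ᵗ g + A t` with
`g s = b₁ s (y₁ s) - b₂ s (y₂ s) ≥ -C |z s|` (comparison at `y₂` plus the Lipschitz bound), so
`z + C ∫ |z|` is nondecreasing. If `z` ever became nonpositive, right-continuity would give a first
such time `τ > 0`, with `z > 0` on `[0, τ)`. On a window `[t₀, τ]` with `C (τ - t₀) ≤ 1/2`, `z` stays
below `M := z τ + C ∫_{t₀}^τ |z| ≥ z t₀ > 0`, whence `z τ ≥ M - C (τ - t₀) M ≥ M / 2 > 0`.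
-/

open MeasureTheory Set

lemma MeasureTheory.IntegrableOn.intervalIntegrable_of_mem_Icc {F : ℝ → ℝ} {a b u v : ℝ}
    (hF : IntegrableOn F (Icc a b)) (hu : u ∈ Icc a b) (hv : v ∈ Icc a b) :
    IntervalIntegrable F volume u v :=
  (hF.mono_set (uIcc_subset_Icc hu hv)).intervalIntegrable

lemma integrable_comp_of_lipschitzWith {α : Type*} [MeasurableSpace α] {μ : Measure α}
    {b : α → ℝ → ℝ} {C : NNReal} (hbm : Measurable (Function.uncurry b))
    (hlip : ∀ t, LipschitzWith C (b t)) (hb0 : Integrable (fun t => b t 0) μ)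
    {y : α → ℝ} (hy : Integrable y μ) : Integrable (fun t => b t (y t)) μ := by
  have hmeas : AEStronglyMeasurable (fun t => b t (y t)) μ :=
    (hbm.comp_aemeasurable (aemeasurable_id.prodMk hy.aemeasurable)).aestronglyMeasurable
  refine (hb0.norm.add (hy.norm.const_mul C)).mono' hmeas (ae_of_all _ fun t => ?_)
  calc ‖b t (y t)‖ ≤ ‖b t 0‖ + ‖b t (y t) - b t 0‖ := norm_le_insert' _ _
    _ ≤ ‖b t 0‖ + C * ‖y t‖ := by simpa using (hlip t).norm_sub_le (y t) 0

lemma exists_first_nonpos_of_continuousWithinAt_Ici {z : ℝ → ℝ} {a b : ℝ}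
    (hz : ∀ t ∈ Icc a b, ContinuousWithinAt z (Ici t) t) (ha : 0 < z a)
    (hnonpos : ∃ t ∈ Icc a b, z t ≤ 0) :
    ∃ τ ∈ Ioc a b, z τ ≤ 0 ∧ ∀ s ∈ Ico a τ, 0 < z s := by
  obtain ⟨t, ht, hzt⟩ := hnonpos
  set S := {t ∈ Icc a b | z t ≤ 0}
  have hSne : S.Nonempty := ⟨t, ht, hzt⟩
  have hSbdd : BddBelow S := ⟨a, fun x hx => hx.1.1⟩
  have haτ : a ≤ sInf S := le_csInf hSne fun x hx => hx.1.1
  have hτb : sInf S ≤ b := (csInf_le hSbdd ⟨ht, hzt⟩).trans ht.2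
  have hzτ : z (sInf S) ≤ 0 := by
    have hcl := ((hz _ ⟨haτ, hτb⟩).mono fun x hx => csInf_le hSbdd hx).mem_closure_image
      (csInf_mem_closure hSne hSbdd)
    have := closure_mono (image_subset_iff.2 fun x hx => hx.2 : z '' S ⊆ Iic 0) hcl
    rwa [closure_Iic] at this
  refine ⟨sInf S, ⟨haτ.lt_of_ne ?_, hτb⟩, hzτ, fun s hs => ?_⟩
  · rintro h
    rw [← h] at hzτ
    linarith
  · by_contra! hs'
    exact (csInf_le hSbdd ⟨⟨hs.1, hs.2.le.trans hτb⟩, hs'⟩).not_gt hs.2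

lemma pos_of_monotoneOn_add_integral_abs_of_mul_le_half {z : ℝ → ℝ} {a b c : ℝ} (hab : a < b)
    (hc : 0 ≤ c) (hcab : c * (b - a) ≤ 1 / 2) (hzi : IntervalIntegrable z volume a b)
    (hpos : ∀ s ∈ Ico a b, 0 < z s)
    (hmono : MonotoneOn (fun s => z s + c * ∫ r in a..s, |z r|) (Icc a b)) : 0 < z b := by
  set M := z b + c * ∫ r in a..b, |z r|
  have hMa : z a ≤ M := by
    simpa using hmono (left_mem_Icc.2 hab.le) (right_mem_Icc.2 hab.le) hab.le
  have hzM : ∀ s ∈ Ioo a b, |z s| ≤ M := fun s hs => by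
    have hle := hmono ⟨hs.1.le, hs.2.le⟩ (right_mem_Icc.2 hab.le) hs.2.le
    have hint : 0 ≤ ∫ r in a..s, |z r| :=
      intervalIntegral.integral_nonneg hs.1.le fun r _ => abs_nonneg _
    rw [abs_of_pos (hpos s ⟨hs.1.le, hs.2⟩)]
    nlinarith
  have hint : ∫ r in a..b, |z r| ≤ (b - a) * M := by
    simpa using intervalIntegral.integral_mono_on_of_le_Ioo hab.le hzi.abs
      intervalIntegrable_const hzM
  have hM : 0 < M := (hpos a ⟨le_rfl, hab⟩).trans_le hMa
  nlinarith [mul_le_mul_of_nonneg_left hint hc]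

lemma pos_of_monotoneOn_add_integral_abs {z : ℝ → ℝ} {a b c : ℝ} (hab : a < b) (hc : 0 ≤ c)
    (hzi : IntervalIntegrable z volume a b) (hpos : ∀ s ∈ Ico a b, 0 < z s)
    (hmono : ∀ t ∈ Ico a b, MonotoneOn (fun s => z s + c * ∫ r in t..s, |z r|) (Icc t b)) :
    0 < z b := by
  set t := max a (b - 1 / (2 * (c + 1)))
  have hδ : 0 < 1 / (2 * (c + 1)) := by positivity
  have hat : a ≤ t := le_max_left _ _
  have htb : t < b := max_lt hab (by linarith)
  have hct : c * (b - t) ≤ 1 / 2 := by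
    calc c * (b - t) ≤ c * (1 / (2 * (c + 1))) :=
          mul_le_mul_of_nonneg_left (by linarith [le_max_right a (b - 1 / (2 * (c + 1)))]) hc
      _ ≤ 1 / 2 := by
          rw [mul_one_div, div_le_div_iff₀ (by positivity) two_pos]
          linarith
  refine pos_of_monotoneOn_add_integral_abs_of_mul_le_half htb hc hct
    (hzi.mono_set ?_) (fun s hs => hpos s ⟨hat.trans hs.1, hs.2⟩) (hmono t ⟨hat, htb⟩)
  rw [uIcc_of_le hab.le, uIcc_of_le htb.le]
  exact Icc_subset_Icc_left hat

lemma monotoneOn_add_integral_of_ae_nonneg {A h : ℝ → ℝ} {a b : ℝ}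
    (hA : MonotoneOn A (Icc a b)) (hh : IntervalIntegrable h volume a b)
    (hh0 : 0 ≤ᵐ[volume.restrict (Icc a b)] h) :
    MonotoneOn (fun s => A s + ∫ r in a..s, h r) (Icc a b) := by
  intro u hu v hv huv
  refine add_le_add (hA hu hv huv) (intervalIntegral.integral_mono_interval le_rfl hu.1 huv
    (ae_restrict_of_ae_restrict_of_subset (Ioc_subset_Icc_self.trans ?_) hh0) (hh.mono_set ?_))
  · exact Icc_subset_Icc_right hv.2
  · rw [uIcc_of_le (hu.1.trans hu.2), uIcc_of_le (hu.1.trans huv)]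
    exact Icc_subset_Icc_right hv.2

lemma monotoneOn_add_integral_abs_of_eq_integral {z g A : ℝ → ℝ} {z₀ c T a : ℝ}
    (hgi : IntegrableOn g (Icc 0 T)) (hzi : IntegrableOn z (Icc 0 T))
    (hA : MonotoneOn A (Icc 0 T))
    (hz : ∀ t ∈ Icc 0 T, z t = z₀ + (∫ s in (0:ℝ)..t, g s) + A t)
    (hgz : ∀ᵐ s ∂(volume.restrict (Icc (0:ℝ) T)), 0 ≤ g s + c * |z s|) (ha : a ∈ Icc 0 T) :
    MonotoneOn (fun s => z s + c * ∫ r in a..s, |z r|) (Icc a T) := by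
  have h0 : (0:ℝ) ∈ Icc 0 T := ⟨le_rfl, ha.1.trans ha.2⟩
  have hzI : IntegrableOn (fun r => |z r|) (Icc 0 T) := hzi.abs
  refine ((monotoneOn_add_integral_of_ae_nonneg (h := fun r => g r + c * |z r|)
    (hA.mono (Icc_subset_Icc_left ha.1))
    ((hgi.add (hzI.const_mul c)).intervalIntegrable_of_mem_Icc ha ⟨h0.2, le_rfl⟩)
    (ae_restrict_of_ae_restrict_of_subset (Icc_subset_Icc_left ha.1) hgz)).add_const
    (z a - A a)).congr fun s hs => ?_
  have hs' : s ∈ Icc 0 T := ⟨ha.1.trans hs.1, hs.2⟩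
  dsimp only
  rw [hz s hs', hz a ha,
    intervalIntegral.integral_add (hgi.intervalIntegrable_of_mem_Icc ha hs')
      ((hzI.intervalIntegrable_of_mem_Icc ha hs').const_mul c),
    intervalIntegral.integral_const_mul,
    ← intervalIntegral.integral_interval_sub_left (hgi.intervalIntegrable_of_mem_Icc h0 hs')
      (hgi.intervalIntegrable_of_mem_Icc h0 ha)]
  ring

theorem stmt_1_general (T : ℝ)
    (b₁ b₂ : ℝ → ℝ → ℝ) (C : NNReal)
    (hb₁m : Measurable (Function.uncurry b₁)) (hb₂m : Measurable (Function.uncurry b₂))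
    (hb₁lip : ∀ t, LipschitzWith C (b₁ t)) (hb₂lip : ∀ t, LipschitzWith C (b₂ t))
    (hb₁0 : MemLp (fun t => b₁ t 0) 2 (volume.restrict (Icc 0 T)))
    (hb₂0 : MemLp (fun t => b₂ t 0) 2 (volume.restrict (Icc 0 T)))
    (f₁ f₂ A : ℝ → ℝ)
    (hAmono : MonotoneOn A (Icc 0 T))
    (hA0 : A 0 = 0)
    (hf : ∀ t ∈ Icc (0:ℝ) T, f₁ t = f₂ t + A t)
    (x₁ x₂ : ℝ) (hx : x₂ < x₁)
    (y₁ y₂ : ℝ → ℝ)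
    (hy₁rc : ∀ t ∈ Icc (0:ℝ) T, ContinuousWithinAt y₁ (Ici t) t)
    (hy₂rc : ∀ t ∈ Icc (0:ℝ) T, ContinuousWithinAt y₂ (Ici t) t)
    (hy₁L2 : MemLp y₁ 2 (volume.restrict (Icc 0 T)))
    (hy₂L2 : MemLp y₂ 2 (volume.restrict (Icc 0 T)))
    (heq₁ : ∀ t ∈ Icc (0:ℝ) T, y₁ t = x₁ + (∫ s in (0:ℝ)..t, b₁ s (y₁ s)) + f₁ t)
    (heq₂ : ∀ t ∈ Icc (0:ℝ) T, y₂ t = x₂ + (∫ s in (0:ℝ)..t, b₂ s (y₂ s)) + f₂ t)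
    (hcomp : ∀ᵐ t ∂(volume.restrict (Icc (0:ℝ) T)), b₂ t (y₂ t) ≤ b₁ t (y₂ t)) :
    ∀ t ∈ Icc (0:ℝ) T, y₂ t < y₁ t := by
  set z : ℝ → ℝ := fun t => y₁ t - y₂ t
  set g : ℝ → ℝ := fun s => b₁ s (y₁ s) - b₂ s (y₂ s)
  have hb₁i : IntegrableOn (fun s => b₁ s (y₁ s)) (Icc 0 T) :=
    integrable_comp_of_lipschitzWith hb₁m hb₁lip (hb₁0.integrable one_le_two)
      (hy₁L2.integrable one_le_two)
  have hb₂i : IntegrableOn (fun s => b₂ s (y₂ s)) (Icc 0 T) :=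
    integrable_comp_of_lipschitzWith hb₂m hb₂lip (hb₂0.integrable one_le_two)
      (hy₂L2.integrable one_le_two)
  have hgi : IntegrableOn g (Icc 0 T) := hb₁i.sub hb₂i
  have hzi : IntegrableOn z (Icc 0 T) :=
    (hy₁L2.integrable one_le_two).sub (hy₂L2.integrable one_le_two)
  have hz : ∀ t ∈ Icc 0 T, z t = (x₁ - x₂) + (∫ s in (0:ℝ)..t, g s) + A t := by
    intro t ht
    have h0 : (0:ℝ) ∈ Icc 0 T := ⟨le_rfl, ht.1.trans ht.2⟩
    simp only [z, g, heq₁ t ht, heq₂ t ht, hf t ht,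
      intervalIntegral.integral_sub (hb₁i.intervalIntegrable_of_mem_Icc h0 ht)
        (hb₂i.intervalIntegrable_of_mem_Icc h0 ht)]
    ring
  have hgz : ∀ᵐ s ∂(volume.restrict (Icc (0:ℝ) T)), 0 ≤ g s + C * |z s| := by
    filter_upwards [hcomp] with s hs
    have := (hb₁lip s).norm_sub_le (y₁ s) (y₂ s)
    simp only [Real.norm_eq_abs] at this
    linarith [neg_abs_le (b₁ s (y₁ s) - b₁ s (y₂ s))]
  intro t ht
  by_contra! hzt
  have hz0 : 0 < z 0 := by
    rw [hz 0 ⟨le_rfl, ht.1.trans ht.2⟩, intervalIntegral.integral_same, hA0]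
    linarith
  obtain ⟨τ, hτ, hzτ, hpos⟩ := exists_first_nonpos_of_continuousWithinAt_Ici
    (fun s hs => (hy₁rc s hs).sub (hy₂rc s hs)) hz0 ⟨t, ht, sub_nonpos.2 hzt⟩
  have hτ' : τ ∈ Icc 0 T := ⟨hτ.1.le, hτ.2⟩
  refine hzτ.not_gt (pos_of_monotoneOn_add_integral_abs hτ.1 C.coe_nonneg
    (hzi.intervalIntegrable_of_mem_Icc ⟨le_rfl, hτ.1.le.trans hτ.2⟩ hτ') hpos fun s hs => ?_)
  exact (monotoneOn_add_integral_abs_of_eq_integral hgi hzi hAmono hz hgz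
    ⟨hs.1, hs.2.le.trans hτ.2⟩).mono (Icc_subset_Icc_right hτ.2)

/-- Comparison lemma for deterministic integral equations (Lemma 6.2, strict inequality). -/
theorem stmt_1 (T : ℝ) (hT : 0 < T)
    (b₁ b₂ : ℝ → ℝ → ℝ) (C : NNReal)
    (hb₁m : Measurable (Function.uncurry b₁)) (hb₂m : Measurable (Function.uncurry b₂))
    (hb₁lip : ∀ t, LipschitzWith C (b₁ t)) (hb₂lip : ∀ t, LipschitzWith C (b₂ t))
    (hb₁0 : MemLp (fun t => b₁ t 0) 2 (volume.restrict (Icc 0 T)))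
    (hb₂0 : MemLp (fun t => b₂ t 0) 2 (volume.restrict (Icc 0 T)))
    (f₁ f₂ A : ℝ → ℝ)
    (hf₂rc : ∀ t ∈ Icc (0:ℝ) T, ContinuousWithinAt f₂ (Ici t) t)
    (hf₂L2 : MemLp f₂ 2 (volume.restrict (Icc 0 T)))
    (hf₁rc : ∀ t ∈ Icc (0:ℝ) T, ContinuousWithinAt f₁ (Ici t) t)
    (hf₁L2 : MemLp f₁ 2 (volume.restrict (Icc 0 T)))
    (hAmono : MonotoneOn A (Icc 0 T))
    (hArc : ∀ t ∈ Icc (0:ℝ) T, ContinuousWithinAt A (Ici t) t)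
    (hA0 : A 0 = 0)
    (hf : ∀ t ∈ Icc (0:ℝ) T, f₁ t = f₂ t + A t)
    (x₁ x₂ : ℝ) (hx : x₂ < x₁)
    (y₁ y₂ : ℝ → ℝ)
    (hy₁rc : ∀ t ∈ Icc (0:ℝ) T, ContinuousWithinAt y₁ (Ici t) t)
    (hy₂rc : ∀ t ∈ Icc (0:ℝ) T, ContinuousWithinAt y₂ (Ici t) t)
    (hy₁L2 : MemLp y₁ 2 (volume.restrict (Icc 0 T)))
    (hy₂L2 : MemLp y₂ 2 (volume.restrict (Icc 0 T)))
    (heq₁ : ∀ t ∈ Icc (0:ℝ) T, y₁ t = x₁ + (∫ s in (0:ℝ)..t, b₁ s (y₁ s)) + f₁ t)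
    (heq₂ : ∀ t ∈ Icc (0:ℝ) T, y₂ t = x₂ + (∫ s in (0:ℝ)..t, b₂ s (y₂ s)) + f₂ t)
    (hcomp : ∀ᵐ t ∂(volume.restrict (Icc (0:ℝ) T)), b₂ t (y₂ t) ≤ b₁ t (y₂ t)) :
    ∀ t ∈ Icc (0:ℝ) T, y₂ t < y₁ t :=
  stmt_1_general T b₁ b₂ C hb₁m hb₂m hb₁lip hb₂lip hb₁0 hb₂0 f₁ f₂ A hAmono hA0 hf x₁ x₂ hx y₁ y₂
    hy₁rc hy₂rc hy₁L2 hy₂L2 heq₁ heq₂ hcomp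
end
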